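/- Let the product automaton N of a DDSA B, a control state b, and an LTL formula ψ over configuration maps be constructed as in Definition 8 (nodes (b', q, φ) with φ a satisfiable formula over V ∪ V₀, built by iterating update along DDSA transitions conjoined with NFA letters). Then for every path π from the initial node to a node (b', q, φ), the formula φ is logically equivalent to the history constraint hist(σ(π), w(π) ⊗ σ(π)), where σ(π) is the symbolic run read off π and w(π) the word of NFA letters; moreover w(π) is accepted along the corresponding NFA path and φ is satisfiable. -/
import Mathlib


/-- A data-aware dynamic system with arithmetic (DDSA). -/
structure DDSA (B A V D : Type) where
  trans : B → A → B → Prop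
  write : A → Set V
  /-- `guard a u v`: the guard assignment reading `u` and writing `v`
  satisfies the executability constraint of `a`. -/
  guard : A → (V → D) → (V → D) → Prop
  final : B → Prop

variable {B A V D Q : Type}

/-- Configuration maps `K : B → (V → D) → Prop`; letters of the NFA alphabet
`Σ = 2^Confs` are sets of configuration maps. -/
abbrev CMap (B V D : Type) := B → (V → D) → Prop

/-- `w(b)` — the conjunction `⋀_{K ∈ w} K(b)` of a letter `w` evaluated at
control state `b`. -/
def wEval (w : Set (CMap B V D)) (b : B) (α : V → D) : Prop :=
  ∀ K ∈ w, K b α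

/-- `φ_ν` — the formula `⋀_{v ∈ V} v = ν(v)` over `V ∪ V₀`
(`Sum.inl` = current variables `V`, `Sum.inr` = initial copy `V₀`). -/
def phiNu (α : (V ⊕ V) → D) : Prop := ∀ v, α (Sum.inl v) = α (Sum.inr v)

/-- The update `update(φ, a) = ∃U. φ(U) ∧ Δ_a(U, V)` of a formula over
`V ∪ V₀`, keeping the initial copy `V₀` fixed. -/
def updH (𝔅 : DDSA B A V D) (φ : ((V ⊕ V) → D) → Prop) (a : A)
    (α : (V ⊕ V) → D) : Prop :=
  ∃ u : V → D,
    φ (Sum.elim u fun v => α (Sum.inr v)) ∧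
    𝔅.guard a u (fun v => α (Sum.inl v)) ∧
    ∀ v ∉ 𝔅.write a, α (Sum.inl v) = u v

/-- History constraint `hist(σ, θ⃗)` of a symbolic run with actions `acts`
and verification constraints `θ`. -/
def histH (𝔅 : DDSA B A V D) (acts : ℕ → A) (θ : ℕ → (V → D) → Prop) :
    ℕ → ((V ⊕ V) → D) → Prop
  | 0, α => phiNu α ∧ θ 0 (fun v => α (Sum.inl v))
  | n + 1, α =>
      updH 𝔅 (histH 𝔅 acts θ n) (acts n) α ∧
      θ (n + 1) (fun v => α (Sum.inl v))

/-- A path of length `n` in the product automaton `N^ψ_{𝔅,b}` of the DDSA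
`𝔅`, a control state `b` and an NFA with transition relation `ntrans` and
initial state `q0` over the alphabet of sets of configuration maps: the path
starts at the initial node `(b̂, q0, φ_ν)`, takes the dummy step into `b`
reading the letter `letters 0`, and then follows DDSA transitions (with
actions `acts`) and NFA transitions simultaneously; each node carries a
formula `forms i` which must equal `update(previous, a) ∧ w(b')` and be
satisfiable. -/
def IsProductPath (𝔅 : DDSA B A V D)
    (ntrans : Q → Set (CMap B V D) → Q → Prop) (q0 : Q) (b : B) (n : ℕ)
    (bs : ℕ → B) (qs : ℕ → Q) (acts : ℕ → A)
    (letters : ℕ → Set (CMap B V D))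
    (forms : ℕ → ((V ⊕ V) → D) → Prop) : Prop :=
  bs 0 = b ∧
  ntrans q0 (letters 0) (qs 0) ∧
  (forms 0 = fun α =>
    phiNu α ∧ wEval (letters 0) (bs 0) (fun v => α (Sum.inl v))) ∧
  (∃ α, forms 0 α) ∧
  ∀ i < n,
    𝔅.trans (bs i) (acts i) (bs (i + 1)) ∧
    ntrans (qs i) (letters (i + 1)) (qs (i + 1)) ∧
    (forms (i + 1) = fun α =>
      updH 𝔅 (forms i) (acts i) α ∧
      wEval (letters (i + 1)) (bs (i + 1)) (fun v => α (Sum.inl v))) ∧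
    (∃ α, forms (i + 1) α)

/-- **Lemma pc, part 2.**  For every path `π` of the product automaton from
the initial node to a node `(bs n, qs n, forms n)`, the endpoint formula
`forms n` is logically equivalent to the history constraint
`hist(σ(π), w(π) ⊗ σ(π))` — where `σ(π)` is the symbolic run read off `π` and
the verification constraints are the letters evaluated at the corresponding
control states — and `forms n` is satisfiable.  (The NFA run along `w(π)` is
part of the product path.) -/
theorem product_path_formula_eq_hist (𝔅 : DDSA B A V D)
    (ntrans : Q → Set (CMap B V D) → Q → Prop) (q0 : Q) (b : B) (n : ℕ)
    (bs : ℕ → B) (qs : ℕ → Q) (acts : ℕ → A)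
    (letters : ℕ → Set (CMap B V D))
    (forms : ℕ → ((V ⊕ V) → D) → Prop)
    (hπ : IsProductPath 𝔅 ntrans q0 b n bs qs acts letters forms) :
    (∀ α, forms n α ↔
        histH 𝔅 acts (fun i => wEval (letters i) (bs i)) n α) ∧
    (∃ α, forms n α) := by
  induction n with
  | zero =>
    obtain ⟨_, _, h0, hs, _⟩ := hπ
    exact ⟨fun α => by rw [h0]; exact Iff.rfl, hs⟩
  | succ n ih =>
    obtain ⟨hb, hq, h0, hs, hstep⟩ := hπ
    have ihn := ih ⟨hb, hq, h0, hs, fun i hi => hstep i (Nat.lt_succ_of_lt hi)⟩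
    obtain ⟨_, _, heq, hsat⟩ := hstep n (Nat.lt_succ_self n)
    refine ⟨fun α => ?_, hsat⟩
    rw [heq]
    constructor
    · rintro ⟨⟨u, hu, hg, hw⟩, hθ⟩
      exact ⟨⟨u, (ihn.1 _).mp hu, hg, hw⟩, hθ⟩
    · rintro ⟨⟨u, hu, hg, hw⟩, hθ⟩
      exact ⟨⟨u, (ihn.1 _).mpr hu, hg, hw⟩, hθ⟩
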